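/- Let M = (1/√2)·e^{7πi/12}·[[1, i],[1, −i]] and let M̄ denote its entrywise complex conjugate. The eigenvalues of M are 1 and e^{2πi/3}, while the eigenvalues of M̄ are 1 and e^{−2πi/3}; in particular, there is no invertible 2×2 complex matrix P with P⁻¹·M·P = M̄, i.e., M is not similar to M̄. -/

import Mathlib

open Matrix Complex

noncomputable section

/-- The associativity matrix `M = a^1_{x,x,x}`. -/
def MM : Matrix (Fin 2) (Fin 2) ℂ :=
  ((1 / (Real.sqrt 2 : ℂ)) * Complex.exp (7 * Real.pi * Complex.I / 12)) •
    !![1, Complex.I; 1, -Complex.I]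

/-- The entrywise complex conjugate of `M`. -/
def MMbar : Matrix (Fin 2) (Fin 2) ℂ := MM.map (starRingEnd ℂ)

/-!
A `2 × 2` matrix with trace `a + b` and determinant `a * b` has spectrum `{a, b}`. Writing
`M = c • !![1, i; 1, -i]` with `c = e^{7πi/12} / √2`, one finds `tr M = c (1 - i) = e^{πi/3} = 1 + ω`
and `det M = -2i c² = ω` for `ω = e^{2πi/3}`, while `M̄` has the conjugate trace and determinant.
Similar matrices have the same spectrum, but `ω̄ ∉ {1, ω}` because `Im ω = sin (2π/3) ≠ 0`.
-/

theorem Matrix.spectrum_fin_two_eq_pair {K : Type*} [Field K]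
    (A : Matrix (Fin 2) (Fin 2) K) {a b : K} (htr : A.trace = a + b) (hdet : A.det = a * b) :
    spectrum K A = {a, b} := by
  ext μ
  have hchar : (algebraMap K _ μ - A).det = (μ - a) * (μ - b) := by
    rw [trace_fin_two] at htr
    rw [det_fin_two] at hdet ⊢
    simp only [sub_apply, algebraMap_matrix_apply, Algebra.algebraMap_self, RingHom.id_apply,
      Fin.isValue, ↓reduceIte, zero_ne_one, one_ne_zero, zero_sub, mul_neg, neg_mul, neg_neg]
    linear_combination (-μ) * htr + hdet
  rw [spectrum.mem_iff, isUnit_iff_isUnit_det, isUnit_iff_ne_zero, not_not, hchar,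
    mul_eq_zero, sub_eq_zero, sub_eq_zero, Set.mem_insert_iff, Set.mem_singleton_iff]

open ComplexConjugate

local notation "ω" => Complex.exp (2 * Real.pi * Complex.I / 3)

lemma one_add_exp_two_pi_mul_I_div_three : 1 + ω = exp (Real.pi / 3 * I) := by
  have hz : exp (Real.pi / 3 * I) = 1 / 2 + Real.sin (Real.pi / 3) * I := by
    rw [exp_mul_I, ← ofReal_ofNat, ← ofReal_div, ← ofReal_cos, ← ofReal_sin,
      Real.cos_pi_div_three]
    push_cast; ring
  have hsin : (Real.sin (Real.pi / 3) : ℂ) ^ 2 = 3 / 4 := by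
    rw [← ofReal_pow, Real.sq_sin_pi_div_three]; push_cast; rfl
  have hω : ω = exp (Real.pi / 3 * I) ^ 2 := by
    rw [← exp_nat_mul]; push_cast; ring_nf
  rw [hω, hz]
  linear_combination (Real.sin (Real.pi / 3) : ℂ) ^ 2 * I_sq - hsin

lemma trace_MM : MM.trace = 1 + ω := by
  have hsplit : exp (7 * Real.pi * I / 12) = exp (Real.pi / 3 * I) * exp (Real.pi / 4 * I) := by
    rw [← exp_add]; ring_nf
  have hquarter : exp (Real.pi / 4 * I) = (Real.sqrt 2 / 2 : ℂ) * (1 + I) := by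
    rw [exp_mul_I, ← ofReal_ofNat, ← ofReal_div, ← ofReal_cos, ← ofReal_sin,
      Real.cos_pi_div_four, Real.sin_pi_div_four]
    push_cast; ring
  have hsqrt : (Real.sqrt 2 : ℂ) ≠ 0 := by norm_num
  rw [trace_fin_two, one_add_exp_two_pi_mul_I_div_three]
  simp only [MM, one_div, hsplit, hquarter, Fin.isValue, Matrix.smul_apply, of_apply, cons_val',
    cons_val_zero, cons_val_fin_one, smul_eq_mul, mul_one, cons_val_one, mul_neg]
  field_simp
  linear_combination -I_sq

lemma det_MM : MM.det = ω := by
  have hsq : exp (7 * Real.pi * I / 12) ^ 2 = ω * exp (Real.pi / 2 * I) := by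
    rw [← exp_add, ← exp_nat_mul]; push_cast; ring_nf
  rw [exp_pi_div_two_mul_I] at hsq
  have hinv : ((Real.sqrt 2 : ℂ)⁻¹) ^ 2 = 1 / 2 := by
    rw [inv_pow, ← ofReal_pow, Real.sq_sqrt zero_le_two]; norm_num
  rw [det_fin_two]
  simp only [MM, one_div, Fin.isValue, Matrix.smul_apply, of_apply, cons_val', cons_val_zero,
    cons_val_fin_one, smul_eq_mul, mul_one, cons_val_one, mul_neg]
  linear_combination (-2 * (Real.sqrt 2 : ℂ)⁻¹ ^ 2 * I) * hsq + (-2 * ω * I ^ 2) * hinv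
    - ω * I_sq

lemma trace_MMbar : MMbar.trace = conj MM.trace := by
  simp [trace_fin_two, MMbar]

lemma det_MMbar : MMbar.det = conj MM.det :=
  ((starRingEnd ℂ).map_det MM).symm

lemma conj_exp_two_pi_mul_I_div_three : conj ω = exp (-(2 * Real.pi * I) / 3) := by
  rw [← Complex.exp_conj, map_div₀, map_mul, map_mul, conj_I, conj_ofReal, map_ofNat, map_ofNat]
  ring_nf

lemma exp_two_pi_mul_I_div_three_im_ne_zero : (ω).im ≠ 0 := by
  rw [show 2 * (Real.pi : ℂ) * I / 3 = ((2 * Real.pi / 3 : ℝ) : ℂ) * I by push_cast; ring,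
    exp_ofReal_mul_I_im]
  exact (Real.sin_pos_of_pos_of_lt_pi (by positivity) (by linarith [Real.pi_pos])).ne'

lemma spectrum_MM : spectrum ℂ MM = {1, ω} :=
  MM.spectrum_fin_two_eq_pair trace_MM (by rw [det_MM, one_mul])

lemma spectrum_MMbar : spectrum ℂ MMbar = {1, conj ω} :=
  MMbar.spectrum_fin_two_eq_pair (by rw [trace_MMbar, trace_MM, map_add, map_one])
    (by rw [det_MMbar, det_MM, one_mul])

lemma conj_exp_two_pi_mul_I_div_three_notMem : conj ω ∉ ({1, ω} : Set ℂ) := by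
  rintro (h | h)
  · exact exp_two_pi_mul_I_div_three_im_ne_zero (by simpa using congrArg im h)
  · exact exp_two_pi_mul_I_div_three_im_ne_zero (conj_eq_iff_im.mp h)

/-- The eigenvalues of `M` are `1` and `e^{2πi/3}`, those of `M̄` are `1` and
`e^{−2πi/3}`; in particular `M` is not similar to `M̄`. -/
theorem M_not_similar_to_conjugate :
    spectrum ℂ MM = {1, Complex.exp (2 * Real.pi * Complex.I / 3)} ∧
    spectrum ℂ MMbar = {1, Complex.exp (-(2 * Real.pi * Complex.I) / 3)} ∧
    ¬ ∃ P : Matrix (Fin 2) (Fin 2) ℂ, IsUnit P ∧ P⁻¹ * MM * P = MMbar := by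
  rw [← conj_exp_two_pi_mul_I_div_three]
  refine ⟨spectrum_MM, spectrum_MMbar, ?_⟩
  rintro ⟨_, ⟨u, rfl⟩, hconj⟩
  have hspec : spectrum ℂ MMbar = spectrum ℂ MM := by
    rw [← hconj, ← coe_units_inv, spectrum.units_conjugate']
  apply conj_exp_two_pi_mul_I_div_three_notMem
  rw [← spectrum_MM, ← hspec, spectrum_MMbar]
  exact Set.mem_insert_of_mem _ rfl
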